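/- For all μ ∈ ℝ and σ > 0, the Fisher information for the dispersion parameter of the maximum extreme value distribution equals (1 + Γ''(2))/σ²: ∫_ℝ [(1/σ)(-1 + z - z·exp(-z))]² · (1/σ) exp(-z) exp(-exp(-z)) dy = (1 + Γ''(2))/σ², where z = (y-μ)/σ and Γ'' is the second derivative of the Gamma function. -/

import Mathlib

open MeasureTheory Real Set Filter Topology Asymptotics Polynomial

/-! Substituting `y = μ + σ z` and then `t = exp (-z)` turns the Fisher information into
`σ⁻² ∫₀^∞ ((t - 1) log t - 1)² e^{-t} dt`. Up to the derivative of
`(t² - t) log² t e^{-t}`, which vanishes at `0` and `∞`, the integrand is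
`t log² t e^{-t} + e^{-t}`, and `∫₀^∞ t^{s-1} logⁿ t e^{-t} dt = Γ⁽ⁿ⁾(s)` by differentiating
the Mellin transform of `e^{-t}` under the integral sign. -/

theorem isBigO_log_pow_mul_exp_neg_atTop (n : ℕ) (a : ℝ) :
    (fun t => log t ^ n * exp (-t)) =O[atTop] (· ^ (-a)) := by
  induction n generalizing a with
  | zero => simpa using (isLittleO_exp_neg_mul_rpow_atTop one_pos (-a)).isBigO
  | succ n ih =>
    simpa [smul_eq_mul, pow_succ, mul_assoc, mul_comm, mul_left_comm] using
      isBigO_rpow_top_log_smul (lt_add_one a) (ih (a + 1))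

theorem isBigO_log_pow_mul_exp_neg_nhdsGT_zero (n : ℕ) {b : ℝ} (hb : 0 < b) :
    (fun t => log t ^ n * exp (-t)) =O[𝓝[>] 0] (· ^ (-b)) := by
  induction n generalizing b with
  | zero =>
    refine IsBigO.of_bound 1 ?_
    filter_upwards [Ioc_mem_nhdsGT one_pos] with t ht
    rw [pow_zero, one_mul, one_mul, norm_of_nonneg (exp_pos _).le,
      norm_of_nonneg (rpow_nonneg ht.1.le _)]
    exact (exp_le_one_iff.mpr (neg_nonpos.mpr ht.1.le)).trans
      (one_le_rpow_of_pos_of_le_one_of_nonpos ht.1 ht.2 (neg_nonpos.mpr hb.le))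
  | succ n ih =>
    simpa [smul_eq_mul, pow_succ, mul_assoc, mul_comm, mul_left_comm] using
      isBigO_rpow_zero_log_smul (half_lt_self hb) (ih (half_pos hb))

theorem continuousOn_log_pow_mul_exp_neg (n : ℕ) :
    ContinuousOn (fun t => log t ^ n * exp (-t)) (Ioi 0) :=
  ((continuousOn_log.mono fun _ ht => ne_of_gt ht).pow n).mul (by fun_prop)

theorem integrableOn_rpow_mul_log_pow_mul_exp_neg (n : ℕ) {s : ℝ} (hs : 0 < s) :
    IntegrableOn (fun t => t ^ (s - 1) * (log t ^ n * exp (-t))) (Ioi 0) :=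
  mellin_convergent_of_isBigO_scalar
    ((continuousOn_log_pow_mul_exp_neg n).locallyIntegrableOn measurableSet_Ioi)
    (isBigO_log_pow_mul_exp_neg_atTop n (s + 1)) (lt_add_one s)
    (isBigO_log_pow_mul_exp_neg_nhdsGT_zero n (half_pos hs)) (half_lt_self hs)

theorem integrableOn_eval_mul_log_pow_mul_exp_neg (p : ℝ[X]) (n : ℕ) :
    IntegrableOn (fun t => p.eval t * (log t ^ n * exp (-t))) (Ioi 0) := by
  induction p using Polynomial.induction_on' with
  | add p q hp hq =>
    exact (hp.add hq).congr_fun (fun t _ => by simp [add_mul]) measurableSet_Ioi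
  | monomial k a =>
    have h := (integrableOn_rpow_mul_log_pow_mul_exp_neg n (Nat.cast_add_one_pos k)).const_mul a
    simpa [mul_assoc, IntegrableOn] using h

theorem tendsto_rpow_mul_log_pow_mul_exp_neg_atTop (n : ℕ) (s : ℝ) :
    Tendsto (fun t => t ^ s * (log t ^ n * exp (-t))) atTop (𝓝 0) := by
  refine ((isBigO_refl (fun t : ℝ => t ^ s) atTop).mul
    (isBigO_log_pow_mul_exp_neg_atTop n (s + 1))).trans_tendsto ?_
  refine (tendsto_rpow_neg_atTop one_pos).congr' ?_
  filter_upwards [eventually_gt_atTop 0] with t ht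
  rw [← rpow_add ht]
  ring_nf

theorem tendsto_rpow_mul_log_pow_mul_exp_neg_nhdsGT_zero (n : ℕ) {s : ℝ} (hs : 0 < s) :
    Tendsto (fun t => t ^ s * (log t ^ n * exp (-t))) (𝓝[>] 0) (𝓝 0) := by
  refine ((isBigO_refl (fun t : ℝ => t ^ s) _).mul
    (isBigO_log_pow_mul_exp_neg_nhdsGT_zero n (half_pos hs))).trans_tendsto ?_
  have h := ((continuous_rpow_const (half_pos hs).le).tendsto 0).mono_left
    (nhdsWithin_le_nhds (s := Ioi 0))
  rw [zero_rpow (half_pos hs).ne'] at h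
  refine h.congr' ?_
  filter_upwards [self_mem_nhdsWithin] with t ht
  rw [← rpow_add ht]
  ring_nf

theorem mellin_ofReal (g : ℝ → ℝ) (s : ℝ) :
    mellin (fun t => (g t : ℂ)) s = ↑(∫ t in Ioi 0, t ^ (s - 1) * g t) := by
  rw [mellin, ← integral_complex_ofReal]
  refine setIntegral_congr_fun measurableSet_Ioi fun t ht => ?_
  rw [smul_eq_mul, Complex.ofReal_mul, Complex.ofReal_cpow (le_of_lt ht)]
  push_cast
  ring_nf

noncomputable def GammaLogPowIntegral (n : ℕ) (s : ℝ) : ℝ :=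
  ∫ t in Ioi 0, t ^ (s - 1) * (log t ^ n * exp (-t))

theorem GammaLogPowIntegral_zero {s : ℝ} (hs : 0 < s) : GammaLogPowIntegral 0 s = Gamma s := by
  rw [Gamma_eq_integral hs, GammaLogPowIntegral]
  simp only [pow_zero, one_mul, mul_comm]

theorem hasDerivAt_GammaLogPowIntegral (n : ℕ) {s : ℝ} (hs : 0 < s) :
    HasDerivAt (GammaLogPowIntegral n) (GammaLogPowIntegral (n + 1) s) s := by
  have hmellin := (mellin_hasDerivAt_of_isBigO_rpow (E := ℂ) (s := s)
    (f := fun t => ((log t ^ n * exp (-t) : ℝ) : ℂ))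
    ((Complex.continuous_ofReal.comp_continuousOn
      (continuousOn_log_pow_mul_exp_neg n)).locallyIntegrableOn measurableSet_Ioi)
    (Complex.isBigO_ofReal_left.mpr (isBigO_log_pow_mul_exp_neg_atTop n (s + 1))) (by simp)
    (Complex.isBigO_ofReal_left.mpr (isBigO_log_pow_mul_exp_neg_nhdsGT_zero n (half_pos hs)))
    (by simpa using half_lt_self hs)).2.real_of_complex
  have hlog : (fun t : ℝ => log t • ((log t ^ n * exp (-t) : ℝ) : ℂ)) =
      fun t => ((log t ^ (n + 1) * exp (-t) : ℝ) : ℂ) := by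
    ext t; rw [Complex.real_smul]; push_cast; ring
  simp only [hlog, mellin_ofReal, Complex.ofReal_re] at hmellin
  exact hmellin

theorem iteratedDeriv_Gamma_eqOn (n : ℕ) :
    EqOn (iteratedDeriv n Gamma) (GammaLogPowIntegral n) (Ioi 0) := by
  induction n with
  | zero => exact fun s hs => (GammaLogPowIntegral_zero hs).symm
  | succ n ih =>
    intro s hs
    rw [iteratedDeriv_succ, (ih.eventuallyEq_of_mem (isOpen_Ioi.mem_nhds hs)).deriv_eq]
    exact (hasDerivAt_GammaLogPowIntegral n hs).deriv

theorem hasDerivAt_sq_sub_mul_log_sq_mul_exp_neg {t : ℝ} (ht : 0 < t) :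
    HasDerivAt (fun t => (t ^ 2 - t) * (log t ^ 2 * exp (-t)))
      ((-t ^ 2 + 3 * t - 1) * (log t ^ 2 * exp (-t)) + (2 * t - 2) * (log t * exp (-t))) t := by
  have h := ((hasDerivAt_pow 2 t).fun_sub (hasDerivAt_id' t)).fun_mul
    (((hasDerivAt_log ht.ne').fun_pow 2).fun_mul (hasDerivAt_neg t).exp)
  refine h.congr_deriv ?_
  field_simp
  ring

theorem integrableOn_deriv_sq_sub_mul_log_sq_mul_exp_neg :
    IntegrableOn (deriv fun t => (t ^ 2 - t) * (log t ^ 2 * exp (-t))) (Ioi 0) := by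
  refine ((integrableOn_eval_mul_log_pow_mul_exp_neg (-X ^ 2 + 3 * X - 1) 2).add
    (integrableOn_eval_mul_log_pow_mul_exp_neg (2 * X - 2) 1)).congr_fun
    (fun t ht => ?_) measurableSet_Ioi
  rw [(hasDerivAt_sq_sub_mul_log_sq_mul_exp_neg ht).deriv]
  simp

theorem integral_Ioi_deriv_sq_sub_mul_log_sq_mul_exp_neg :
    ∫ t in Ioi 0, deriv (fun t => (t ^ 2 - t) * (log t ^ 2 * exp (-t))) t = 0 := by
  set Φ : ℝ → ℝ := fun t => (t ^ 2 - t) * (log t ^ 2 * exp (-t)) with hΦ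
  have hΦ_rpow : Φ = fun t => t ^ (2 : ℝ) * (log t ^ 2 * exp (-t)) -
      t ^ (1 : ℝ) * (log t ^ 2 * exp (-t)) := by
    ext t
    rw [hΦ, rpow_two, rpow_one]
    ring
  have hcont : ContinuousWithinAt Φ (Ici 0) 0 := by
    rw [← Ioi_insert, continuousWithinAt_insert_self, ContinuousWithinAt]
    simpa [hΦ_rpow] using (tendsto_rpow_mul_log_pow_mul_exp_neg_nhdsGT_zero 2 two_pos).sub
      (tendsto_rpow_mul_log_pow_mul_exp_neg_nhdsGT_zero 2 one_pos)
  have htop : Tendsto Φ atTop (𝓝 0) := by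
    simpa [hΦ_rpow] using (tendsto_rpow_mul_log_pow_mul_exp_neg_atTop 2 2).sub
      (tendsto_rpow_mul_log_pow_mul_exp_neg_atTop 2 1)
  simpa [hΦ] using integral_Ioi_of_hasDerivAt_of_tendsto hcont
    (fun t ht => (hasDerivAt_sq_sub_mul_log_sq_mul_exp_neg ht).differentiableAt.hasDerivAt)
    integrableOn_deriv_sq_sub_mul_log_sq_mul_exp_neg htop

theorem integral_Ioi_sq_sub_one_mul_log_sub_one_mul_exp_neg :
    ∫ t in Ioi 0, ((t - 1) * log t - 1) ^ 2 * exp (-t) = 1 + deriv (deriv Gamma) 2 := by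
  have hmoment : IntegrableOn (fun t => t * (log t ^ 2 * exp (-t))) (Ioi 0) := by
    simpa using integrableOn_eval_mul_log_pow_mul_exp_neg X 2
  have hsplit : ∀ t ∈ Ioi (0 : ℝ), ((t - 1) * log t - 1) ^ 2 * exp (-t) =
      t * (log t ^ 2 * exp (-t)) + exp (-t) -
        deriv (fun t => (t ^ 2 - t) * (log t ^ 2 * exp (-t))) t := by
    intro t ht
    rw [(hasDerivAt_sq_sub_mul_log_sq_mul_exp_neg ht).deriv]
    ring
  have hGamma : deriv (deriv Gamma) 2 = GammaLogPowIntegral 2 2 := by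
    rw [← iteratedDeriv_Gamma_eqOn 2 (two_pos : (0 : ℝ) < 2), iteratedDeriv_succ,
      iteratedDeriv_one]
  rw [setIntegral_congr_fun measurableSet_Ioi hsplit, integral_sub, integral_add hmoment
    (integrableOn_exp_neg_Ioi 0), integral_exp_neg_Ioi_zero,
    integral_Ioi_deriv_sq_sub_mul_log_sq_mul_exp_neg, hGamma, GammaLogPowIntegral]
  · norm_num
    ring
  · exact hmoment.add (integrableOn_exp_neg_Ioi 0)
  · exact integrableOn_deriv_sq_sub_mul_log_sq_mul_exp_neg

theorem integral_comp_exp_neg {E : Type*} [NormedAddCommGroup E] [NormedSpace ℝ E]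
    (g : ℝ → E) : ∫ x, exp (-x) • g (exp (-x)) = ∫ t in Ioi 0, g t := by
  rw [integral_neg_eq_self (fun x => exp x • g (exp x)), ← range_exp, ← image_univ,
    integral_image_eq_integral_abs_deriv_smul MeasurableSet.univ
      (fun x _ => (hasDerivAt_exp x).hasDerivWithinAt) exp_injective.injOn,
    Measure.restrict_univ]
  simp only [abs_of_pos (exp_pos _)]

theorem integral_comp_sub_div {E : Type*} [NormedAddCommGroup E] [NormedSpace ℝ E] (g : ℝ → E)
    (μ σ : ℝ) : ∫ y, g ((y - μ) / σ) = |σ| • ∫ z, g z := by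
  rw [integral_sub_right_eq_self (fun y => g (y / σ)) μ, Measure.integral_comp_div]

theorem integral_gumbel_dispersion_score_sq :
    ∫ z, (-1 + z - z * exp (-z)) ^ 2 * (exp (-z) * exp (-exp (-z))) =
      1 + deriv (deriv Gamma) 2 := by
  rw [← integral_Ioi_sq_sub_one_mul_log_sub_one_mul_exp_neg,
    ← integral_comp_exp_neg fun t => ((t - 1) * log t - 1) ^ 2 * exp (-t)]
  congr 1
  ext z
  rw [log_exp, smul_eq_mul]
  ring

/-- The Fisher information for the dispersion parameter of the maximum extreme value
distribution equals `(1 + Γ''(2))/σ²`, with `Γ''` the second derivative of the Gamma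
function. -/
theorem gumbel_max_dispersion_fisher_information (μ σ : ℝ) (hσ : 0 < σ) :
    ∫ y : ℝ,
        ((1 / σ) * (-1 + (y - μ) / σ - ((y - μ) / σ) * Real.exp (-((y - μ) / σ)))) ^ 2 *
          ((1 / σ) * Real.exp (-((y - μ) / σ)) * Real.exp (-Real.exp (-((y - μ) / σ)))) =
      (1 + deriv (deriv Real.Gamma) 2) / σ ^ 2 := by
  set score_sq_density : ℝ → ℝ :=
    fun z => (-1 + z - z * exp (-z)) ^ 2 * (exp (-z) * exp (-exp (-z)))
  calc _ = ∫ y, (1 / σ) ^ 3 * score_sq_density ((y - μ) / σ) := by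
        congr 1
        ext y
        ring
    _ = (1 / σ) ^ 3 * (σ * (1 + deriv (deriv Gamma) 2)) := by
        rw [integral_const_mul, integral_comp_sub_div, abs_of_pos hσ,
          integral_gumbel_dispersion_score_sq, smul_eq_mul]
    _ = _ := by
        field_simp
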